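/- arXiv:1302.0115 — 2 statements merged into one kernel-verified Lean document; each statement's English description precedes it below -/
import Mathlib

section
/- For the Pólya urn sequence with base measure α on a finite set X (X₁ ~ α/α(X), and X_n | X₁,…,X_{n−1} ~ (α + Σ_{k<n} δ_{X_k})/(α(X)+n−1)), the joint law of (X₁,…,X_n) is exchangeable: it is invariant under any permutation of the coordinates. -/
/-!
Grouping the numerator factors of `polya α x` by colour `y`, the factors with `x i = y` are
`α y + r` where `r` runs through the ranks `0, 1, …` of the positions of colour `y`, so the
numerator is `∏ y, α y (α y + 1) ⋯ (α y + m_y - 1)` with `m_y` the number of occurrences of `y`.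
This depends on `x` only through the counts `m_y`, which a permutation of the coordinates keeps,
and the denominator does not depend on `x` at all.
-/

open Finset

/-- The Pólya urn joint distribution `M_n^α` on `X^n`:
`M_n^α(x₁,…,x_n) = ∏_{i=1}^n (α(x_i) + #{k < i : x_k = x_i}) / (α(X) + i − 1)`. -/
noncomputable def polya {X : Type*} [Fintype X] [DecidableEq X] (α : X → ℝ) {n : ℕ}
    (x : Fin n → X) : ℝ :=
  ∏ i : Fin n,
    (α (x i) + ((Finset.univ.filter fun k => k < i ∧ x k = x i).card : ℝ)) /
      ((∑ y, α y) + (i : ℕ))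

theorem Finset.prod_card_filter_lt {ι M : Type*} [LinearOrder ι] [CommMonoid M]
    (s : Finset ι) (f : ℕ → M) :
    ∏ i ∈ s, f #{k ∈ s | k < i} = ∏ j ∈ range #s, f j := by
  refine s.induction_on_max (by simp) fun a s hlt ih => ?_
  have ha : a ∉ s := fun h => lt_irrefl a (hlt a h)
  have below : ∀ i ∈ s, {k ∈ insert a s | k < i} = {k ∈ s | k < i} := fun i hi => by
    rw [filter_insert, if_neg (not_lt.mpr (hlt i hi).le)]
  have at_max : {k ∈ insert a s | k < a} = s := by
    rw [filter_insert, if_neg (lt_irrefl a), filter_true_of_mem hlt]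
  rw [prod_insert ha, card_insert_of_notMem ha, prod_range_succ, at_max, mul_comm,
    prod_congr rfl fun i hi => by rw [below i hi], ih]

section

variable {X : Type*} [DecidableEq X]

theorem card_filter_comp_perm_eq {n : ℕ} (x : Fin n → X) (σ : Equiv.Perm (Fin n)) (y : X) :
    #{i | x (σ i) = y} = #{i | x i = y} :=
  card_equiv σ (by simp)

variable [Fintype X]

theorem polya_numerator_eq (α : X → ℝ) {n : ℕ} (x : Fin n → X) :
    ∏ i : Fin n, (α (x i) + (#{k | k < i ∧ x k = x i} : ℝ)) =
      ∏ y, ∏ j ∈ range #{i | x i = y}, (α y + j) := by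
  rw [← prod_fiberwise univ x]
  refine prod_congr rfl fun y _ => ?_
  rw [← prod_card_filter_lt]
  refine prod_congr rfl fun i hi => ?_
  obtain rfl : x i = y := (mem_filter.mp hi).2
  simp_rw [filter_filter, and_comm]

theorem polya_eq (α : X → ℝ) {n : ℕ} (x : Fin n → X) :
    polya α x =
      (∏ y, ∏ j ∈ range #{i | x i = y}, (α y + j)) / ∏ i : Fin n, ((∑ y, α y) + i) := by
  rw [polya, prod_div_distrib, polya_numerator_eq]

end

theorem polya_exchangeable_general {X : Type*} [Fintype X] [DecidableEq X]
    (α : X → ℝ)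
    {n : ℕ} (x : Fin n → X) (σ : Equiv.Perm (Fin n)) :
    polya α (x ∘ σ) = polya α x := by
  simp only [polya_eq, Function.comp_apply, card_filter_comp_perm_eq]

/-- The Pólya urn joint law is exchangeable: invariant under any permutation of coordinates. -/
theorem polya_exchangeable {X : Type*} [Fintype X] [DecidableEq X]
    (α : X → ℝ) (hα : ∀ y, 0 ≤ α y) (hα0 : 0 < ∑ y, α y)
    {n : ℕ} (x : Fin n → X) (σ : Equiv.Perm (Fin n)) :
    polya α (x ∘ σ) = polya α x :=
  polya_exchangeable_general α x σ
end

section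
/- (Marginal invariance of the Pólya urn under data augmentation.) For every n ≥ 1 and every y ∈ X^n, Σ_{x ∈ X^n} M_n^{α_x}(y) · M_n^α(x) = M_n^α(y), where α_x = α + Σ_{k=1}^n δ_{x_k}. -/
open Finset

/-- The updated base measure `α_x(y) = α(y) + #{k ≤ n : x_k = y}`. -/
noncomputable def polyaAug {X : Type*} [Fintype X] [DecidableEq X] (α : X → ℝ) {n : ℕ}
    (x : Fin n → X) : X → ℝ :=
  fun y => α y + ((Finset.univ.filter fun k => x k = y).card : ℝ)

/-! Conditioning the first draw of the urn on its colour `c`, which has probability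
`α c / α(X)`, leaves a Pólya urn with base measure `α + δ_c`; the same holds for the
augmented measure, since `α_{(c, x)} = (α + δ_c)_x`. By induction on `n` the sum therefore
reduces to `Σ_c M^α(c, y) = M^α(y)`, the fact that forgetting the first draw gives the urn
again. That in turn follows by induction on the length of `y` from the exchangeability of the
first two draws, `α c · (α + δ_c) d = α d · (α + δ_d) c`. -/

lemma sum_fin_succ_pi {X M : Type*} [Fintype X] [AddCommMonoid M] {n : ℕ}
    (f : (Fin (n + 1) → X) → M) :
    ∑ x, f x = ∑ c, ∑ x : Fin n → X, f (Fin.cons c x) := by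
  rw [← Fintype.sum_prod_type']
  exact (Fintype.sum_equiv (Fin.consEquiv fun _ => X) _ _ fun _ => rfl).symm

section

variable {X : Type*} [Fintype X] [DecidableEq X]

@[simp]
lemma polya_fin_zero (β : X → ℝ) (x : Fin 0 → X) : polya β x = 1 := by
  simp [polya]

@[simp]
lemma polyaAug_fin_zero (β : X → ℝ) (x : Fin 0 → X) : polyaAug β x = β := by
  ext; simp [polyaAug]

lemma sum_add_single_one (β : X → ℝ) (c : X) :
    ∑ z, (β + Pi.single c 1 : X → ℝ) z = ∑ z, β z + 1 := by
  simp [Finset.sum_add_distrib]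

lemma polyaAug_cons (β : X → ℝ) {n : ℕ} (c : X) (x : Fin n → X) :
    polyaAug β (Fin.cons c x) = polyaAug (β + Pi.single c 1) x := by
  ext z
  simp only [polyaAug, Finset.card_filter, Fin.sum_univ_succ, Fin.cons_zero, Fin.cons_succ,
    Pi.add_apply, Pi.single_apply, eq_comm (a := z)]
  push_cast
  ring

lemma polya_cons (β : X → ℝ) {n : ℕ} (c : X) (x : Fin n → X) :
    polya β (Fin.cons c x) = β c / (∑ z, β z) * polya (β + Pi.single c 1) x := by
  have hcount (i : Fin n) :
      (#{k : Fin (n + 1) | k < i.succ ∧ (Fin.cons c x : Fin (n + 1) → X) k = x i} : ℝ) =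
        (Pi.single c 1 : X → ℝ) (x i) + #{k | k < i ∧ x k = x i} := by
    simp only [Finset.card_filter, Fin.sum_univ_succ, Fin.cons_zero, Fin.cons_succ,
      Fin.succ_lt_succ_iff, Fin.succ_pos, Pi.single_apply, eq_comm (a := c)]
    push_cast
    simp
  rw [polya, Fin.prod_univ_succ, polya]
  congr 1
  · simp
  · refine Finset.prod_congr rfl fun i _ => ?_
    rw [Fin.cons_succ, hcount, sum_add_single_one, Fin.val_succ, Pi.add_apply]
    push_cast
    ring

lemma polya_cons_cons_comm (β : X → ℝ) {n : ℕ} (c d : X) (x : Fin n → X) :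
    polya β (Fin.cons c (Fin.cons d x)) = polya β (Fin.cons d (Fin.cons c x)) := by
  simp only [polya_cons, sum_add_single_one, add_right_comm β]
  rcases eq_or_ne c d with rfl | hcd
  · rfl
  · simp [hcd, hcd.symm]
    ring

lemma sum_polya_cons (β : X → ℝ) (hβ : 0 < ∑ z, β z) {n : ℕ} (x : Fin n → X) :
    ∑ c, polya β (Fin.cons c x) = polya β x := by
  induction n generalizing β with
  | zero => simp [polya_cons, ← Finset.sum_div, hβ.ne']
  | succ n ih =>
    rw [← Fin.cons_self_tail x]
    simp only [polya_cons_cons_comm β _ (x 0), polya_cons β (x 0), ← Finset.mul_sum]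
    rw [ih _ (by rw [sum_add_single_one]; linarith)]

theorem sum_polya_polyaAug_mul_polya (β : X → ℝ) (hβ : 0 < ∑ z, β z) (n : ℕ) {m : ℕ}
    (y : Fin m → X) :
    ∑ x : Fin n → X, polya (polyaAug β x) y * polya β x = polya β y := by
  induction n generalizing β with
  | zero => simp
  | succ n ih =>
    calc ∑ x : Fin (n + 1) → X, polya (polyaAug β x) y * polya β x
        = ∑ c, β c / (∑ z, β z) * ∑ x : Fin n → X,
            polya (polyaAug (β + Pi.single c 1) x) y * polya (β + Pi.single c 1) x := by
          simp only [sum_fin_succ_pi, polyaAug_cons, polya_cons, Finset.mul_sum]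
          exact sum_congr rfl fun c _ => sum_congr rfl fun x _ => by ring
      _ = ∑ c, polya β (Fin.cons c y) := by
          simp only [polya_cons]
          congr! 2 with c
          rw [ih _ (by rw [sum_add_single_one]; linarith)]
      _ = polya β y := sum_polya_cons β hβ y

end

theorem polya_marginal_invariance_general {X : Type*} [Fintype X] [DecidableEq X]
    (α : X → ℝ) (hα0 : 0 < ∑ y, α y)
    {n : ℕ} (y : Fin n → X) :
    ∑ x : Fin n → X, polya (polyaAug α x) y * polya α x = polya α y :=
  sum_polya_polyaAug_mul_polya α hα0 n y

/-- Marginal invariance of the Pólya urn under data augmentation: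
`Σ_x M_n^{α_x}(y) · M_n^α(x) = M_n^α(y)`. -/
theorem polya_marginal_invariance {X : Type*} [Fintype X] [DecidableEq X] [Nonempty X]
    (α : X → ℝ) (hα : ∀ y, 0 ≤ α y) (hα0 : 0 < ∑ y, α y)
    {n : ℕ} (hn : 1 ≤ n) (y : Fin n → X) :
    ∑ x : Fin n → X, polya (polyaAug α x) y * polya α x = polya α y :=
  polya_marginal_invariance_general α hα0 y
end
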